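/- Every classical correlation matrix g satisfies the CHSH constraint Σ_{(a_I,b_I) ∈ {0,1}²} P(a_O ⊕ b_O = a_I ∧ b_I | a_I, b_I) ≤ 3, where P(a_O ⊕ b_O = a_I ∧ b_I | a_I, b_I) = Σ_{(a_O,b_O): a_O⊕b_O = a_I∧b_I} g(a_I,b_I)(a_O,b_O). -/
import Mathlib


/-- A pairial index: Alice's bit and Bob's bit. -/
abbrev Pair := Fin 2 × Fin 2

/-- A two-party correlation matrix: `g I O` is the probability of output pair
`O = (a_O, b_O)` given input pair `I = (a_I, b_I)`. -/
def IsCorrMat (g : Pair → Pair → ℝ) : Prop :=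
  (∀ I O, 0 ≤ g I O) ∧ ∀ I, ∑ O : Pair, g I O = 1

/-- A 2-by-2 stochastic matrix, `m i o` is the probability of output `o` given
input `i` (columns indexed by inputs sum to 1). -/
def IsStoch (m : Fin 2 → Fin 2 → ℝ) : Prop :=
  (∀ i o, 0 ≤ m i o) ∧ ∀ i, ∑ o, m i o = 1

/-- A classical (local hidden variable) correlation matrix. -/
def IsClassical (g : Pair → Pair → ℝ) : Prop :=
  ∃ (n : ℕ) (P : Fin n → ℝ) (ma mb : Fin n → Fin 2 → Fin 2 → ℝ),
    (∀ i, 0 ≤ P i) ∧ (∑ i, P i = 1) ∧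
    (∀ i, IsStoch (ma i)) ∧ (∀ i, IsStoch (mb i)) ∧
    (∀ I O, g I O = ∑ i, P i * (ma i I.1 O.1 * mb i I.2 O.2))

/-- Non-signaling from Alice to Bob: Bob's marginal is independent of Alice's input. -/
def NonSigAtoB (g : Pair → Pair → ℝ) : Prop :=
  ∀ bI bO : Fin 2, ∑ aO, g (0, bI) (aO, bO) = ∑ aO, g (1, bI) (aO, bO)

/-- Non-signaling from Bob to Alice. -/
def NonSigBtoA (g : Pair → Pair → ℝ) : Prop :=
  ∀ aI aO : Fin 2, ∑ bO, g (aI, 0) (aO, bO) = ∑ bO, g (aI, 1) (aO, bO)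

/-- Index of a pair of bits into `Fin 4`, in the order (0,0),(0,1),(1,0),(1,1). -/
def idx (p : Pair) : Fin 4 := ⟨2 * p.1.val + p.2.val, by omega⟩

/-- The correlation matrix g̃ of Theorem 1; rows are output pairs, columns are
input pairs, both in the order (0,0),(0,1),(1,0),(1,1). -/
noncomputable def gtilde (I O : Pair) : ℝ :=
  (!![1/4, 0,   1/4, 0;
      1/4, 1/2, 1/4, 1/2;
      0,   1/4, 0,   1/4;
      1/2, 1/4, 1/2, 1/4] : Matrix (Fin 4) (Fin 4) ℝ) (idx O) (idx I)

/-- A total prior on input pairs. -/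
def IsTotalPrior (P : Pair → ℝ) : Prop :=
  (∀ I, 0 < P I) ∧ ∑ I : Pair, P I = 1

/-- The posterior distribution on output pairs induced by `g` and the prior `P`. -/
def post (g : Pair → Pair → ℝ) (P : Pair → ℝ) (O : Pair) : ℝ :=
  ∑ I : Pair, g I O * P I

/-- The Bayesian inverse (time-reverse) of `g` with respect to the prior `P`:
output pairs become inputs and vice versa. -/
noncomputable def binv (g : Pair → Pair → ℝ) (P : Pair → ℝ) (O I : Pair) : ℝ :=
  g I O * P I / post g P O


lemma stoch_CHSH (ma mb : Fin 2 → Fin 2 → ℝ) (ha : IsStoch ma) (hb : IsStoch mb) :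
    ∑ I : Pair, ∑ O : Pair, (if O.1 + O.2 = I.1 * I.2 then ma I.1 O.1 * mb I.2 O.2 else 0) ≤ 3 := by
  obtain ⟨ha0, ha1⟩ := ha
  obtain ⟨hb0, hb1⟩ := hb
  have ea0 := ha1 0; have ea1 := ha1 1; have eb0 := hb1 0; have eb1 := hb1 1
  simp [Fin.sum_univ_two] at ea0 ea1 eb0 eb1
  simp only [Fintype.sum_prod_type, Fin.sum_univ_two]
  simp only [Fin.isValue, Fin.reduceAdd, Fin.reduceMul, Fin.reduceEq, reduceIte]
  have ra0 : ma 0 1 = 1 - ma 0 0 := by linarith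
  have ra1 : ma 1 1 = 1 - ma 1 0 := by linarith
  have rb0 : mb 0 1 = 1 - mb 0 0 := by linarith
  have rb1 : mb 1 1 = 1 - mb 1 0 := by linarith
  rw [ra0, ra1, rb0, rb1]
  rcases le_total (ma 0 0) (ma 1 0) with h | h
  · nlinarith [mul_nonneg (ha0 0 0) (by linarith [hb0 0 1] : (0:ℝ) ≤ 1 - mb 0 0), mul_nonneg (hb0 0 0) (by linarith [ha0 1 1] : (0:ℝ) ≤ 1 - ma 1 0),
      mul_nonneg (hb0 1 0) (sub_nonneg.mpr h)]
  · nlinarith [mul_nonneg (hb0 0 0) (by linarith [ha0 0 1] : (0:ℝ) ≤ 1 - ma 0 0), mul_nonneg (ha0 1 0) (by linarith [hb0 0 1] : (0:ℝ) ≤ 1 - mb 0 0),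
      mul_nonneg (by linarith [hb0 1 1] : (0:ℝ) ≤ 1 - mb 1 0) (sub_nonneg.mpr h)]

/-- every classical correlation matrix satisfies the CHSH
constraint: summed over the four input settings, the probability of
`a_O ⊕ b_O = a_I ∧ b_I` is at most 3. -/
theorem classical_CHSH (g : Pair → Pair → ℝ) (hg : IsClassical g) :
    ∑ I : Pair, ∑ O : Pair, (if O.1 + O.2 = I.1 * I.2 then g I O else 0) ≤ 3 := by
  obtain ⟨n, P, ma, mb, hP, hPsum, hma, hmb, hgeq⟩ := hg
  have key : ∑ I : Pair, ∑ O : Pair, (if O.1 + O.2 = I.1 * I.2 then g I O else 0)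
      = ∑ i : Fin n, P i * ∑ I : Pair, ∑ O : Pair,
        (if O.1 + O.2 = I.1 * I.2 then ma i I.1 O.1 * mb i I.2 O.2 else 0) := by
    simp only [Fintype.sum_prod_type, Fin.sum_univ_two, Fin.isValue, Fin.reduceAdd,
      Fin.reduceMul, Fin.reduceEq, reduceIte, add_zero, zero_add, hgeq]
    rw [← Finset.sum_add_distrib, ← Finset.sum_add_distrib, ← Finset.sum_add_distrib,
      ← Finset.sum_add_distrib, ← Finset.sum_add_distrib, ← Finset.sum_add_distrib,
      ← Finset.sum_add_distrib]
    exact Finset.sum_congr rfl fun i _ => by ring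
  rw [key]
  calc ∑ i : Fin n, P i * ∑ I : Pair, ∑ O : Pair,
        (if O.1 + O.2 = I.1 * I.2 then ma i I.1 O.1 * mb i I.2 O.2 else 0)
      ≤ ∑ i : Fin n, P i * 3 := by
        refine Finset.sum_le_sum fun i _ => ?_
        exact mul_le_mul_of_nonneg_left (stoch_CHSH (ma i) (mb i) (hma i) (hmb i)) (hP i)
    _ = 3 := by rw [← Finset.sum_mul, hPsum, one_mul]
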